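/- arXiv:2010.07890 — 2 statements merged into one kernel-verified Lean document; each statement's English description precedes it below -/
import Mathlib

section
/- Let h be the arithmetic function h(n) = n for n ≥ 1 (with h(0) := 0). Let n, m ≥ 1 be integers and let μ be a partition of m. Then 𝓗(μ, n) = (∏_{k=0}^{|μ|+ℓ(μ)−1} (n − k)) · Σ_{λ ∈ Orb(μ)} ∏_{k=1}^{ℓ(λ)} (k + Σ_{i=1}^{k} λ_i)^{−1}. -/
open Finset Polynomial

/-- The recursively defined polynomials `P_n^{g,h}` attached to arithmetic functions
`g, h : ℕ → ℝ` (values at `0` are irrelevant): `P_0 = 1` and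
`P_n(x) = (x / h(n)) · Σ_{k=1}^n g(k) · P_{n-k}(x)`. -/
noncomputable def Ppoly (g h : ℕ → ℝ) : ℕ → Polynomial ℝ
  | 0 => 1
  | (n+1) => Polynomial.C (h (n+1))⁻¹ * Polynomial.X *
      ∑ k ∈ Finset.range (n+1), Polynomial.C (g (k+1)) * Ppoly g h (n - k)
  termination_by n => n
  decreasing_by simp_wf

/-- `A_{n,m}^{g,h}`: the coefficient of `x^m` in `(∏_{k=1}^n h(k)) · P_n^{g,h}(x)`. -/
noncomputable def Acoeff (g h : ℕ → ℝ) (n m : ℕ) : ℝ :=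
  (∏ k ∈ Finset.Icc 1 n, h k) * (Ppoly g h n).coeff m

/-- `h` extended by the convention `h(0) := 0`. -/
noncomputable def hExt (h : ℕ → ℝ) (n : ℕ) : ℝ := if n = 0 then 0 else h n

/-- `h_m(n) = ∏_{k=0}^{m-1} h(n-k)` (with the convention `h(0) := 0`). -/
noncomputable def hIter (h : ℕ → ℝ) (m n : ℕ) : ℝ :=
  ∏ k ∈ Finset.range m, hExt h (n - k)

/-- Helper for `H(μ,n)`: defined on reversed compositions, peeling off the head
(which is the last part `μ_{r+1}` of the original composition). -/
noncomputable def Hrev (h : ℕ → ℝ) : List ℕ → ℕ → ℝ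
  | [], _ => 1
  | (a :: t), n =>
      if n < (a :: t).sum + (a :: t).length then 0
      else ∑ k ∈ Finset.Ico ((a :: t).sum + (a :: t).length - 1) n,
        hIter h a k * Hrev h t (k - a)

/-- `H(μ, n)` for a composition `μ` (a list of positive integers): `H(ε,n) = 1`,
`H(μ,n) = Σ_{k=|μ|+ℓ(μ)-1}^{n-1} h_{μ_{r+1}}(k) · H((μ_1,…,μ_r), k - μ_{r+1})`
if `n ≥ |μ| + ℓ(μ)`, and `0` otherwise. -/
noncomputable def HFun (h : ℕ → ℝ) (μ : List ℕ) (n : ℕ) : ℝ := Hrev h μ.reverse n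

/-- `𝓗(μ, n) = Σ_{λ ∈ Orb(μ)} H(λ, n)`: sum over all distinct rearrangements of `μ`. -/
noncomputable def HCal (h : ℕ → ℝ) (μ : List ℕ) (n : ℕ) : ℝ :=
  ∑ lam ∈ μ.permutations.toFinset, HFun h lam n

/-- `𝓖(μ) = ∏_{k=1}^{ℓ(μ)} g(μ_k + 1)`. -/
noncomputable def GCal (g : ℕ → ℝ) (μ : List ℕ) : ℝ := (μ.map (fun p => g (p + 1))).prod


/-! For `h = id` one has `h_a(k) = k(k-1)⋯(k-a+1)`, so the recursion for `H(λ, n)` multiplies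
falling factorials: `h_a(k)` times the falling factorial of length `N` at `k - a` is the falling
factorial of length `a + N` at `k`. The remaining sum over `k` is the hockey-stick identity
`(M+1) Σ_{k<n} k(k-1)⋯(k-M+1) = n(n-1)⋯(n-M)`, which produces the factor `(k + Σ_{i≤k} λ_i)⁻¹`
for the last part. By induction, each `H(λ, n)` is the falling factorial of length `|λ|+ℓ(λ)` at
`n` times `∏_k (k + Σ_{i≤k} λ_i)⁻¹`, and one sums over the rearrangements of `μ`. -/

section FallingProducts

variable {R : Type*} [CommRing R]

lemma prod_range_sub_mul_prod_range_sub (x : R) (a N : ℕ) :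
    (∏ j ∈ range a, (x - j)) * ∏ j ∈ range N, (x - a - j) = ∏ j ∈ range (a + N), (x - j) := by
  rw [prod_range_add]
  congr 1
  refine prod_congr rfl fun j _ => ?_
  push_cast
  ring

lemma succ_mul_sum_range_prod_range_sub (M n : ℕ) :
    (M + 1 : R) * ∑ k ∈ range n, ∏ j ∈ range M, ((k : R) - j) =
      ∏ j ∈ range (M + 1), ((n : R) - j) := by
  induction n with
  | zero => simp [prod_range_succ']
  | succ n ih =>
    have shift : ∏ j ∈ range (M + 1), ((n + 1 : ℕ) - (j : R)) =
        (n + 1) * ∏ j ∈ range M, ((n : R) - j) := by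
      rw [prod_range_succ', mul_comm]
      congr 1
      · push_cast; ring
      · refine prod_congr rfl fun j _ => ?_
        push_cast
        ring
    rw [sum_range_succ, mul_add, ih, shift, prod_range_succ]
    ring

lemma sum_Ico_prod_range_sub (M n : ℕ) :
    ∑ k ∈ Ico M n, ∏ j ∈ range M, ((k : R) - j) = ∑ k ∈ range n, ∏ j ∈ range M, ((k : R) - j) := by
  refine sum_subset (fun k hk => mem_range.2 (mem_Ico.1 hk).2) fun k hkn hkM => ?_
  have hk : k < M := by
    simp only [mem_Ico, mem_range, not_and] at hkn hkM
    omega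
  exact prod_eq_zero (mem_range.2 hk) (sub_self _)

end FallingProducts

lemma hIter_natCast (a k : ℕ) :
    hIter (fun x => (x : ℝ)) a k = ∏ j ∈ range a, ((k : ℝ) - j) := by
  have hExt_natCast (x : ℕ) : hExt (fun x => (x : ℝ)) x = x := by
    by_cases hx : x = 0 <;> simp [hExt, hx]
  unfold hIter
  by_cases hak : a ≤ k
  · refine prod_congr rfl fun j hj => ?_
    rw [hExt_natCast, Nat.cast_sub (by have := mem_range.1 hj; omega)]
  · have hk : k ∈ range a := mem_range.2 (by omega)
    rw [prod_eq_zero hk (by simp [hExt_natCast]), prod_eq_zero hk (sub_self _)]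

lemma HFun_nil (h : ℕ → ℝ) (n : ℕ) : HFun h [] n = 1 := by
  simp [HFun, Hrev]

lemma HFun_append_singleton (h : ℕ → ℝ) (l : List ℕ) (a n : ℕ) :
    HFun h (l ++ [a]) n =
      if n < (l ++ [a]).sum + (l ++ [a]).length then 0
      else ∑ k ∈ Ico ((l ++ [a]).sum + (l ++ [a]).length - 1) n,
        hIter h a k * HFun h l (k - a) := by
  have size_eq : (a :: l.reverse).sum + (a :: l.reverse).length =
      (l ++ [a]).sum + (l ++ [a]).length := by
    simp only [List.sum_cons, List.sum_reverse, List.length_cons, List.length_reverse,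
      List.sum_append, List.length_append, List.sum_nil, List.length_nil]
    ring
  rw [HFun, List.reverse_append, List.reverse_singleton, List.singleton_append, Hrev, size_eq]
  rfl

lemma prod_Icc_take_append_singleton {α M : Type*} [CommMonoid M] (f : ℕ → List α → M)
    (l : List α) (a : α) :
    ∏ k ∈ Icc 1 (l ++ [a]).length, f k ((l ++ [a]).take k) =
      (∏ k ∈ Icc 1 l.length, f k (l.take k)) * f (l.length + 1) (l ++ [a]) := by
  rw [List.length_append, List.length_singleton, prod_Icc_succ_top (by omega),
    List.take_of_length_le (by simp)]
  congr 1
  exact prod_congr rfl fun k hk => by rw [List.take_append_of_le_length (mem_Icc.1 hk).2]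

lemma HFun_natCast (l : List ℕ) (n : ℕ) :
    HFun (fun k => (k : ℝ)) l n =
      (∏ k ∈ range (l.sum + l.length), ((n : ℝ) - k)) *
        ∏ k ∈ Icc 1 l.length, ((k : ℝ) + (l.take k).sum)⁻¹ := by
  induction l using List.reverseRecOn generalizing n with
  | nil => simp [HFun_nil]
  | append_singleton l a ih =>
    set N := l.sum + l.length
    have size_eq : (l ++ [a]).sum + (l ++ [a]).length = a + N + 1 := by
      simp only [List.sum_append, List.length_append, List.sum_singleton, List.length_singleton, N]
      ring
    rw [HFun_append_singleton, size_eq,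
      prod_Icc_take_append_singleton (fun k t => ((k : ℝ) + (t.sum : ℕ))⁻¹)]
    split_ifs with hn
    · rw [prod_eq_zero (mem_range.2 hn) (sub_self _), zero_mul]
    have summand_eq : ∀ k ∈ Ico (a + N + 1 - 1) n,
        hIter (fun x => (x : ℝ)) a k * HFun (fun x => (x : ℝ)) l (k - a) =
          (∏ j ∈ range (a + N), ((k : ℝ) - j)) *
            ∏ k ∈ Icc 1 l.length, ((k : ℝ) + (l.take k).sum)⁻¹ := by
      intro k hk
      rw [hIter_natCast, ih, Nat.cast_sub (by have := (mem_Ico.1 hk).1; omega), ← mul_assoc,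
        prod_range_sub_mul_prod_range_sub]
    have hockey_stick := succ_mul_sum_range_prod_range_sub (R := ℝ) (a + N) n
    rw [sum_congr rfl summand_eq, ← sum_mul, Nat.add_sub_cancel, sum_Ico_prod_range_sub,
      ← hockey_stick]
    have last_factor : ((l.length + 1 : ℕ) : ℝ) + ((l ++ [a]).sum : ℕ) = (a + N : ℕ) + 1 := by
      simp only [List.sum_append, List.sum_singleton, N]
      push_cast
      ring
    rw [last_factor]
    field_simp

theorem HCal_h_id_general (n m : ℕ) (μ : Nat.Partition m) :
    HCal (fun k => (k : ℝ)) μ.parts.toList n =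
      (∏ k ∈ Finset.range (μ.parts.sum + Multiset.card μ.parts), ((n : ℝ) - (k : ℝ))) *
        ∑ lam ∈ μ.parts.toList.permutations.toFinset,
          ∏ k ∈ Finset.Icc 1 lam.length, ((k : ℝ) + ((lam.take k).sum : ℝ))⁻¹ := by
  rw [HCal, mul_sum]
  refine sum_congr rfl fun lam hlam => ?_
  have hperm : lam.Perm μ.parts.toList := List.mem_permutations.1 (List.mem_toFinset.1 hlam)
  rw [HFun_natCast, hperm.sum_eq, hperm.length_eq, Multiset.sum_toList, Multiset.length_toList]

/-- For `h = id` and a partition `μ` of `m`: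
`𝓗(μ, n) = ∏_{k=0}^{|μ|+ℓ(μ)-1}(n-k) · Σ_{λ ∈ Orb(μ)} ∏_{k=1}^{ℓ(λ)} (k + Σ_{i=1}^k λ_i)⁻¹`. -/
theorem HCal_h_id (n m : ℕ) (hn : 1 ≤ n) (hm : 1 ≤ m) (μ : Nat.Partition m) :
    HCal (fun k => (k : ℝ)) μ.parts.toList n =
      (∏ k ∈ Finset.range (μ.parts.sum + Multiset.card μ.parts), ((n : ℝ) - (k : ℝ))) *
        ∑ lam ∈ μ.parts.toList.permutations.toFinset,
          ∏ k ∈ Finset.Icc 1 lam.length, ((k : ℝ) + ((lam.take k).sum : ℝ))⁻¹ :=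
  HCal_h_id_general n m μ
end

section
/- Let h be a normalized non-vanishing arithmetic function, extended by h(0) := 0, and let 1 denote the constant arithmetic function 1(n) = 1. Then for every n ≥ 1, P_n^{1,h}(x) = (1/∏_{k=1}^{n} h(k)) · ∏_{k=0}^{n−1} (x + h(k)). -/
open Finset Polynomial

lemma Ppoly_one_succ (h : ℕ → ℝ) (n : ℕ) :
    Ppoly (fun _ => 1) h (n + 1) =
      C (h (n + 1))⁻¹ * X * ∑ j ∈ range (n + 1), Ppoly (fun _ => 1) h j := by
  rw [Ppoly, ← sum_range_reflect]
  simp only [map_one, one_mul]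
  refine congrArg _ (sum_congr rfl fun k hk => congrArg _ ?_)
  have := mem_range.mp hk
  omega

/-- With `S n = ∑_{j ≤ n} P_j`, the recursion reads `h(n+1) P_{n+1} = X S_n`, so
`h(n+1) S_{n+1} = (X + h(n+1)) S_n`. -/
lemma sum_range_Ppoly_one (h : ℕ → ℝ) (hnv : ∀ k, 1 ≤ k → h k ≠ 0) (n : ℕ) :
    ∑ j ∈ range (n + 1), Ppoly (fun _ => 1) h j =
      C (∏ k ∈ Icc 1 n, h k)⁻¹ * ∏ k ∈ Icc 1 n, (X + C (h k)) := by
  induction n with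
  | zero => simp [Ppoly]
  | succ n ih =>
    have hC : C (h (n + 1))⁻¹ * C (h (n + 1)) = 1 := by
      rw [← map_mul, inv_mul_cancel₀ (hnv _ n.succ_pos), map_one]
    rw [sum_range_succ, Ppoly_one_succ, ih, prod_Icc_succ_top n.succ_pos,
      prod_Icc_succ_top n.succ_pos, mul_inv, map_mul]
    linear_combination (-(C (∏ k ∈ Icc 1 n, h k)⁻¹ * ∏ k ∈ Icc 1 n, (X + C (h k)))) * hC

lemma prod_range_succ_X_add_hExt (h : ℕ → ℝ) (n : ℕ) :
    ∏ k ∈ range (n + 1), (X + C (hExt h k)) = X * ∏ k ∈ Icc 1 n, (X + C (h k)) := by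
  rw [prod_range_succ', range_eq_Ico, prod_Ico_add' (fun k => X + C (hExt h k)),
    Ico_add_one_right_eq_Icc, mul_comm]
  simp only [hExt, if_pos, map_zero, add_zero]
  refine congrArg _ (prod_congr rfl fun k hk => ?_)
  rw [if_neg (by have := (mem_Icc.mp hk).1; omega)]

theorem P_one_h_general (h : ℕ → ℝ) (hnv : ∀ k, 1 ≤ k → h k ≠ 0)
    (n : ℕ) :
    Ppoly (fun _ => 1) h n =
      Polynomial.C (∏ k ∈ Finset.Icc 1 n, h k)⁻¹ *
        ∏ k ∈ Finset.range n, (Polynomial.X + Polynomial.C (hExt h k)) := by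
  cases n with
  | zero => simp [Ppoly]
  | succ m =>
    rw [Ppoly_one_succ, sum_range_Ppoly_one h hnv, prod_range_succ_X_add_hExt,
      prod_Icc_succ_top m.succ_pos, mul_inv, map_mul]
    ring

/-- For `g = 1`: `P_n^{1,h}(x) = (∏_{k=1}^n h(k))⁻¹ · ∏_{k=0}^{n-1} (x + h(k))`,
with the convention `h(0) := 0`. -/
theorem P_one_h (h : ℕ → ℝ) (hh : h 1 = 1) (hnv : ∀ k, 1 ≤ k → h k ≠ 0)
    (n : ℕ) (hn : 1 ≤ n) :
    Ppoly (fun _ => 1) h n =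
      Polynomial.C (∏ k ∈ Finset.Icc 1 n, h k)⁻¹ *
        ∏ k ∈ Finset.range n, (Polynomial.X + Polynomial.C (hExt h k)) :=
  P_one_h_general h hnv n
end
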